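/- Let π ∈ (0,1)^n with n ≥ 2 and h(a,b)=ab+(1−a)(1−b). The set A = {x ∈ (0,1)^n : |x_i − x_j| ≤ h(π_i, 1−π_j) ≤ x_i + x_j for all i ≠ j} is a bounded set whose closure is contained in [0,1]^n and which contains both π and 1−π; moreover every zero of the mean-field vector field f in (0,1)^n lies in A. -/
import Mathlib


open Real Finset

/-- Sign of a Boolean: `true ↦ +1`, `false ↦ -1`. -/
def sg (b : Bool) : ℝ := if b then 1 else -1

/-- Output distribution (cosh form). -/
noncomputable def gc {n : ℕ} (x : Fin n → ℝ) (r : Fin n → ℝ) : ℝ :=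
  Real.cosh ((∑ j, r j * Real.log ((1 - x j) / x j)) / 2) *
    ∏ j, Real.sqrt (x j * (1 - x j))

/-- Update field coordinate (tanh form). -/
noncomputable def ft {n : ℕ} (r x : Fin n → ℝ) (i : Fin n) : ℝ :=
  (1/2) * (1 - Real.tanh ((∑ j, r j * Real.log ((1 - x j) / x j)) / 2) * r i) - x i

/-- KL divergence from `g_p` to `g_x` (sum over the hypercube `{±1}^n`). -/
noncomputable def V {n : ℕ} (p x : Fin n → ℝ) : ℝ :=
  ∑ r : Fin n → Bool, gc p (fun k => sg (r k)) *
    Real.log (gc p (fun k => sg (r k)) / gc x (fun k => sg (r k)))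

/-- Mean-field vector field `f_i(x) = E_{R ∼ g_p}[f̃_i(R,x)]`. -/
noncomputable def fvec {n : ℕ} (p x : Fin n → ℝ) (i : Fin n) : ℝ :=
  ∑ r : Fin n → Bool, gc p (fun k => sg (r k)) * ft (fun k => sg (r k)) x i

/-- `h(a,b) = ab + (1-a)(1-b)`. -/
def hh (a b : ℝ) : ℝ := a * b + (1 - a) * (1 - b)

/-- The compact localization set `A`. -/
def A (n : ℕ) (p : Fin n → ℝ) : Set (Fin n → ℝ) :=
  {x | (∀ i, x i ∈ Set.Ioo (0:ℝ) 1) ∧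
    ∀ i j, i ≠ j → |x i - x j| ≤ hh (p i) (1 - p j) ∧ hh (p i) (1 - p j) ≤ x i + x j}



lemma sumprod {n : ℕ} (v : Fin n → Bool → ℝ) :
    ∑ r : Fin n → Bool, ∏ k, v k (r k) = ∏ k, (v k true + v k false) := by
  classical
  rw [show (Finset.univ : Finset (Fin n → Bool)) = Fintype.piFinset (fun _ => Finset.univ) from
    (Fintype.piFinset_univ).symm, ← Finset.prod_univ_sum]
  simp

lemma sqrt_eq_exp' {x : ℝ} (hx : 0 < x) : Real.sqrt x = Real.exp (Real.log x / 2) := by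
  rw [Real.sqrt_eq_rpow, Real.rpow_def_of_pos hx]; ring_nf

lemma factor {p : ℝ} (hp : 0 < p) (hp1 : p < 1) (b : Bool) :
    Real.exp (sg b * Real.log ((1 - p) / p) / 2) * Real.sqrt (p * (1 - p))
      = if b then 1 - p else p := by
  have h1 : (0:ℝ) < 1 - p := by linarith
  rw [sqrt_eq_exp' (by positivity), Real.log_div (by linarith) (ne_of_gt hp),
    Real.log_mul (ne_of_gt hp) (ne_of_gt h1), ← Real.exp_add]
  cases b
  · simp only [Bool.false_eq_true, if_false, sg]
    rw [show (-1:ℝ) * (Real.log (1-p) - Real.log p) / 2 + (Real.log p + Real.log (1-p)) / 2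
      = Real.log p by ring, Real.exp_log hp]
  · simp only [if_true, sg]
    rw [show (1:ℝ) * (Real.log (1-p) - Real.log p) / 2 + (Real.log p + Real.log (1-p)) / 2
      = Real.log (1-p) by ring, Real.exp_log h1]

lemma abs_tanh_le (x : ℝ) : |Real.tanh x| ≤ 1 := by
  rw [Real.tanh_eq_sinh_div_cosh, abs_div]
  have hc : 0 < Real.cosh x := Real.cosh_pos x
  rw [abs_of_pos hc, div_le_one hc]
  nlinarith [Real.cosh_sq x, abs_nonneg (Real.sinh x), sq_abs (Real.sinh x), hc]

lemma gc_eq {n : ℕ} (p : Fin n → ℝ) (hp : ∀ i, p i ∈ Set.Ioo (0:ℝ) 1) (r : Fin n → Bool) :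
    gc p (fun k => sg (r k)) =
      ((∏ k, (if r k then 1 - p k else p k)) + ∏ k, (if r k then p k else 1 - p k)) / 2 := by
  have e1 : Real.exp ((∑ j, sg (r j) * Real.log ((1 - p j) / p j)) / 2) *
      ∏ j, Real.sqrt (p j * (1 - p j)) = ∏ k, (if r k then 1 - p k else p k) := by
    rw [Finset.sum_div, Real.exp_sum, ← Finset.prod_mul_distrib]
    exact Finset.prod_congr rfl fun k _ => factor (hp k).1 (hp k).2 (r k)
  have e2 : Real.exp (-((∑ j, sg (r j) * Real.log ((1 - p j) / p j)) / 2)) *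
      ∏ j, Real.sqrt (p j * (1 - p j)) = ∏ k, (if r k then p k else 1 - p k) := by
    have hneg : -((∑ j, sg (r j) * Real.log ((1 - p j) / p j)) / 2)
        = ∑ j, sg (!(r j)) * Real.log ((1 - p j) / p j) / 2 := by
      rw [Finset.sum_div, ← Finset.sum_neg_distrib]
      exact Finset.sum_congr rfl fun k _ => by cases r k <;> simp [sg] <;> ring
    rw [hneg, Real.exp_sum, ← Finset.prod_mul_distrib]
    refine Finset.prod_congr rfl fun k _ => ?_
    rw [factor (hp k).1 (hp k).2 (!(r k))]
    cases r k <;> simp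
  unfold gc
  rw [Real.cosh_eq, div_mul_eq_mul_div, add_mul, e1, e2]

lemma prod_pair_ite {n : ℕ} {i j : Fin n} (hij : i ≠ j) (f : Fin n → ℝ) :
    ∏ k, (if k = i ∨ k = j then f k else 1) = f i * f j := by
  classical
  rw [← Finset.prod_subset (Finset.subset_univ ({i, j} : Finset (Fin n)))
      (fun x _ hx => by
        simp only [Finset.mem_insert, Finset.mem_singleton] at hx
        push_neg at hx
        simp [hx.1, hx.2])]
  rw [Finset.prod_pair hij]
  simp

lemma sum_gc_one {n : ℕ} (p : Fin n → ℝ) (hp : ∀ i, p i ∈ Set.Ioo (0:ℝ) 1) :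
    ∑ r : Fin n → Bool, gc p (fun k => sg (r k)) = 1 := by
  calc ∑ r : Fin n → Bool, gc p (fun k => sg (r k))
      = ∑ r : Fin n → Bool, ((∏ k, (if r k then 1 - p k else p k))
          + ∏ k, (if r k then p k else 1 - p k)) / 2 :=
        Finset.sum_congr rfl fun r _ => gc_eq p hp r
    _ = ((∑ r : Fin n → Bool, ∏ k, (if r k then 1 - p k else p k))
          + ∑ r : Fin n → Bool, ∏ k, (if r k then p k else 1 - p k)) / 2 := by
        rw [← Finset.sum_div, Finset.sum_add_distrib]
    _ = 1 := by
        rw [sumprod (fun k b => if b then 1 - p k else p k),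
            sumprod (fun k b => if b then p k else 1 - p k)]
        simp

lemma sum_gc_sg {n : ℕ} (p : Fin n → ℝ) (hp : ∀ i, p i ∈ Set.Ioo (0:ℝ) 1)
    {i j : Fin n} (hij : i ≠ j) :
    ∑ r : Fin n → Bool, gc p (fun k => sg (r k)) * (sg (r i) * sg (r j))
      = (1 - 2 * p i) * (1 - 2 * p j) := by
  classical
  calc ∑ r : Fin n → Bool, gc p (fun k => sg (r k)) * (sg (r i) * sg (r j))
      = ∑ r : Fin n → Bool,
          ((∏ k, ((if r k then 1 - p k else p k) * (if k = i ∨ k = j then sg (r k) else 1)))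
            + ∏ k, ((if r k then p k else 1 - p k) * (if k = i ∨ k = j then sg (r k) else 1))) / 2 := by
        refine Finset.sum_congr rfl fun r _ => ?_
        rw [gc_eq p hp r, Finset.prod_mul_distrib, Finset.prod_mul_distrib,
          prod_pair_ite hij (fun k => sg (r k))]
        ring
    _ = ((∑ r : Fin n → Bool, ∏ k, ((if r k then 1 - p k else p k) * (if k = i ∨ k = j then sg (r k) else 1)))
          + ∑ r : Fin n → Bool, ∏ k, ((if r k then p k else 1 - p k) * (if k = i ∨ k = j then sg (r k) else 1))) / 2 := by
        rw [← Finset.sum_div, Finset.sum_add_distrib]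
    _ = ((1 - 2 * p i) * (1 - 2 * p j) + (2 * p i - 1) * (2 * p j - 1)) / 2 := by
        rw [sumprod (fun k b => (if b then 1 - p k else p k) * (if k = i ∨ k = j then sg b else 1)),
            sumprod (fun k b => (if b then p k else 1 - p k) * (if k = i ∨ k = j then sg b else 1))]
        rw [show (∏ k, ((if true then 1 - p k else p k) * (if k = i ∨ k = j then sg true else 1)
              + (if false then 1 - p k else p k) * (if k = i ∨ k = j then sg false else 1)))
            = ∏ k, (if k = i ∨ k = j then 1 - 2 * p k else 1) from
          Finset.prod_congr rfl fun k _ => by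
            by_cases h : k = i ∨ k = j <;> simp [h, sg] <;> ring]
        rw [show (∏ k, ((if true then p k else 1 - p k) * (if k = i ∨ k = j then sg true else 1)
              + (if false then p k else 1 - p k) * (if k = i ∨ k = j then sg false else 1)))
            = ∏ k, (if k = i ∨ k = j then 2 * p k - 1 else 1) from
          Finset.prod_congr rfl fun k _ => by
            by_cases h : k = i ∨ k = j <;> simp [h, sg] <;> ring]
        rw [prod_pair_ite hij, prod_pair_ite hij]
    _ = (1 - 2 * p i) * (1 - 2 * p j) := by ring

lemma sum_gc_ind {n : ℕ} (p : Fin n → ℝ) (hp : ∀ i, p i ∈ Set.Ioo (0:ℝ) 1)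
    {i j : Fin n} (hij : i ≠ j) :
    ∑ r : Fin n → Bool, gc p (fun k => sg (r k)) * (if r i = r j then 0 else 1)
      = hh (p i) (1 - p j) := by
  calc ∑ r : Fin n → Bool, gc p (fun k => sg (r k)) * (if r i = r j then (0:ℝ) else 1)
      = ∑ r : Fin n → Bool, (gc p (fun k => sg (r k))
          - gc p (fun k => sg (r k)) * (sg (r i) * sg (r j))) / 2 := by
        refine Finset.sum_congr rfl fun r _ => ?_
        have h1 : (if r i = r j then (0:ℝ) else 1) = (1 - sg (r i) * sg (r j)) / 2 := by
          cases hri : r i <;> cases hrj : r j <;> simp [sg] <;> norm_num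
        rw [h1]; ring
    _ = ((∑ r : Fin n → Bool, gc p (fun k => sg (r k)))
          - ∑ r : Fin n → Bool, gc p (fun k => sg (r k)) * (sg (r i) * sg (r j))) / 2 := by
        rw [← Finset.sum_div, Finset.sum_sub_distrib]
    _ = hh (p i) (1 - p j) := by
        rw [sum_gc_one p hp, sum_gc_sg p hp hij]; unfold hh; ring

lemma zero_mem {n : ℕ} (p : Fin n → ℝ) (hp : ∀ i, p i ∈ Set.Ioo (0:ℝ) 1)
    (x : Fin n → ℝ) (hx : ∀ i, x i ∈ Set.Ioo (0:ℝ) 1) (hf : ∀ i, fvec p x i = 0) :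
    x ∈ A n p := by
  classical
  have hgnn : ∀ r : Fin n → Bool, 0 ≤ gc p (fun k => sg (r k)) := fun r =>
    mul_nonneg (Real.cosh_pos _).le (Finset.prod_nonneg fun k _ => Real.sqrt_nonneg _)
  have hfix : ∀ i, x i = ∑ r : Fin n → Bool, gc p (fun k => sg (r k)) *
      ((1/2) * (1 - Real.tanh ((∑ j, sg (r j) * Real.log ((1 - x j) / x j)) / 2) * sg (r i))) := by
    intro i
    have h0 := hf i
    simp only [fvec, ft] at h0
    have e : (∑ r : Fin n → Bool, gc p (fun k => sg (r k)) *
        ((1/2) * (1 - Real.tanh ((∑ j, sg (r j) * Real.log ((1 - x j) / x j)) / 2) * sg (r i)) - x i))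
        = (∑ r : Fin n → Bool, gc p (fun k => sg (r k)) *
        ((1/2) * (1 - Real.tanh ((∑ j, sg (r j) * Real.log ((1 - x j) / x j)) / 2) * sg (r i))))
          - (∑ r : Fin n → Bool, gc p (fun k => sg (r k))) * x i := by
      simp only [mul_sub]
      rw [Finset.sum_sub_distrib, ← Finset.sum_mul]
    rw [e, sum_gc_one p hp] at h0
    linarith
  refine ⟨hx, fun i j hij => ?_⟩
  have key := sum_gc_ind p hp hij
  have hφnn : ∀ (r : Fin n → Bool) (k : Fin n),
      0 ≤ (1/2) * (1 - Real.tanh ((∑ j, sg (r j) * Real.log ((1 - x j) / x j)) / 2) * sg (r k)) := by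
    intro r k
    set t := Real.tanh ((∑ j, sg (r j) * Real.log ((1 - x j) / x j)) / 2) with hts
    have ht := abs_le.mp (abs_tanh_le ((∑ j, sg (r j) * Real.log ((1 - x j) / x j)) / 2))
    rw [← hts] at ht
    cases hrk : r k
    · simp only [sg, hrk, Bool.false_eq_true, if_false]
      linarith [ht.1]
    · simp only [sg, hrk, if_true]
      linarith [ht.2]
  constructor
  · rw [hfix i, hfix j, ← Finset.sum_sub_distrib]
    calc |∑ r : Fin n → Bool, (gc p (fun k => sg (r k)) *
            ((1/2) * (1 - Real.tanh ((∑ j, sg (r j) * Real.log ((1 - x j) / x j)) / 2) * sg (r i)))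
          - gc p (fun k => sg (r k)) *
            ((1/2) * (1 - Real.tanh ((∑ j, sg (r j) * Real.log ((1 - x j) / x j)) / 2) * sg (r j))))|
        ≤ ∑ r : Fin n → Bool, |gc p (fun k => sg (r k)) *
            ((1/2) * (1 - Real.tanh ((∑ j, sg (r j) * Real.log ((1 - x j) / x j)) / 2) * sg (r i)))
          - gc p (fun k => sg (r k)) *
            ((1/2) * (1 - Real.tanh ((∑ j, sg (r j) * Real.log ((1 - x j) / x j)) / 2) * sg (r j)))| :=
          Finset.abs_sum_le_sum_abs _ _
      _ ≤ ∑ r : Fin n → Bool, gc p (fun k => sg (r k)) * (if r i = r j then 0 else 1) := by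
          refine Finset.sum_le_sum fun r _ => ?_
          rw [← mul_sub, abs_mul, abs_of_nonneg (hgnn r)]
          refine mul_le_mul_of_nonneg_left ?_ (hgnn r)
          by_cases h' : r i = r j
          · simp [h']
          · simp only [h', if_false]
            set t := Real.tanh ((∑ j, sg (r j) * Real.log ((1 - x j) / x j)) / 2) with hts
            rw [show (1/2) * (1 - t * sg (r i)) - (1/2) * (1 - t * sg (r j))
                = t * (sg (r j) - sg (r i)) / 2 from by ring, abs_div, abs_mul]
            have h2 : |sg (r j) - sg (r i)| = 2 := by
              cases hri : r i <;> cases hrj : r j <;>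
                simp [hri, hrj, sg] at h' ⊢ <;> norm_num
            rw [h2, abs_two]
            have := abs_tanh_le ((∑ j, sg (r j) * Real.log ((1 - x j) / x j)) / 2)
            rw [← hts] at this
            linarith
      _ = hh (p i) (1 - p j) := key
  · rw [hfix i, hfix j, ← Finset.sum_add_distrib]
    calc hh (p i) (1 - p j)
        = ∑ r : Fin n → Bool, gc p (fun k => sg (r k)) * (if r i = r j then 0 else 1) := key.symm
      _ ≤ _ := by
          refine Finset.sum_le_sum fun r _ => ?_
          rw [← mul_add]
          refine mul_le_mul_of_nonneg_left ?_ (hgnn r)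
          by_cases h' : r i = r j
          · rw [if_pos h']
            exact add_nonneg (hφnn r i) (hφnn r j)
          · rw [if_neg h']
            have hs : sg (r i) + sg (r j) = 0 := by
              cases hri : r i <;> cases hrj : r j <;> simp [hri, hrj, sg] at h' ⊢
            set t := Real.tanh ((∑ j, sg (r j) * Real.log ((1 - x j) / x j)) / 2) with hts
            have h2 : t * sg (r i) + t * sg (r j) = 0 := by rw [← mul_add, hs, mul_zero]
            linarith

theorem stmt17 (n : ℕ) (hn : 2 ≤ n) (p : Fin n → ℝ)
    (hp : ∀ i, p i ∈ Set.Ioo (0:ℝ) 1) :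
    Bornology.IsBounded (A n p) ∧
    closure (A n p) ⊆ {x | ∀ i, x i ∈ Set.Icc (0:ℝ) 1} ∧
    p ∈ A n p ∧ (fun i => 1 - p i) ∈ A n p ∧
    ∀ x : Fin n → ℝ, (∀ i, x i ∈ Set.Ioo (0:ℝ) 1) → (∀ i, fvec p x i = 0) →
      x ∈ A n p := by
  have hsub : A n p ⊆ Set.pi Set.univ (fun _ => Set.Icc (0:ℝ) 1) := by
    intro x hx i _
    exact ⟨(hx.1 i).1.le, (hx.1 i).2.le⟩
  refine ⟨?_, ?_, ?_, ?_, fun x hx hf => zero_mem p hp x hx hf⟩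
  · exact ((isCompact_univ_pi fun _ => isCompact_Icc).isBounded).subset hsub
  · intro x hx i
    have hcl : closure (A n p) ⊆ Set.pi Set.univ (fun _ => Set.Icc (0:ℝ) 1) :=
      closure_minimal hsub (isClosed_set_pi fun _ _ => isClosed_Icc)
    exact hcl hx i (Set.mem_univ i)
  · refine ⟨hp, fun i j hij => ?_⟩
    have hi := hp i; have hj := hp j
    unfold hh
    constructor
    · rw [abs_le]; constructor <;> nlinarith [hi.1, hi.2, hj.1, hj.2]
    · nlinarith [hi.1, hi.2, hj.1, hj.2]
  · refine ⟨fun i => ⟨show (0:ℝ) < 1 - p i from by linarith [(hp i).2],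
        show (1:ℝ) - p i < 1 from by linarith [(hp i).1]⟩, fun i j hij => ?_⟩
    have hi := hp i; have hj := hp j
    constructor
    · show |(1 - p i) - (1 - p j)| ≤ hh (p i) (1 - p j)
      unfold hh
      rw [abs_le]; constructor <;> nlinarith [hi.1, hi.2, hj.1, hj.2]
    · show hh (p i) (1 - p j) ≤ (1 - p i) + (1 - p j)
      unfold hh
      nlinarith [hi.1, hi.2, hj.1, hj.2]
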